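/- arXiv:0906.3416 — 2 statements merged into one kernel-verified Lean document; each statement's English description precedes it below -/
import Mathlib

section
/- Let (X, d) be a metric space, μ a Borel probability measure, and T : X → X a measure-preserving map having superpolynomial decay of correlations with respect to Lipschitz observables. Let f : X → [0,∞) be ℓ-Lipschitz, set S_r = {x : f(x) ≤ r}, and suppose the limit d(f) = lim_{r→0} log μ(S_r)/log r exists. Then for μ-almost every x ∈ X, limsup_{r→0} log τ(x, S_r) / (−log r) ≤ d(f). -/
open Filter MeasureTheory Metric Set Topology ENNReal NNReal

/-- Hitting time of the set `S` for the orbit of `x` under `T`: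
`τ(x,S) = min {n ∈ ℕ⁺ : Tⁿ x ∈ S}`, equal to `⊤` if the orbit never enters `S`. -/
noncomputable def hitTime {X : Type*} (T : X → X) (S : Set X) (x : X) : ℕ∞ :=
  sInf ((fun n : ℕ => (n : ℕ∞)) '' {n : ℕ | 0 < n ∧ T^[n] x ∈ S})

/-- Superpolynomial decay of correlations with respect to Lipschitz observables: there is
`Φ : ℕ → [0,∞)` with `n^α Φ(n) → 0` for every `α > 0` such that
`|∫ φ∘Tⁿ ψ dμ − ∫φ dμ ∫ψ dμ| ≤ ‖φ‖ ‖ψ‖ Φ(n)` for all Lipschitz `φ, ψ : X → ℝ`, where `‖φ‖`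
is the Lipschitz norm (the supremum norm plus the Lipschitz constant). -/
def SuperpolynomialDecayOfCorrelations {X : Type*} [MetricSpace X] [MeasurableSpace X]
    (μ : MeasureTheory.Measure X) (T : X → X) : Prop :=
  ∃ Φ : ℕ → ℝ, (∀ n, 0 ≤ Φ n) ∧
    (∀ α : ℝ, 0 < α → Tendsto (fun n : ℕ => (n : ℝ) ^ α * Φ n) atTop (𝓝 0)) ∧
    ∀ (φ ψ : X → ℝ) (Kφ Kψ : ℝ≥0) (Cφ Cψ : ℝ),
      LipschitzWith Kφ φ → LipschitzWith Kψ ψ →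
      (∀ x, |φ x| ≤ Cφ) → (∀ x, |ψ x| ≤ Cψ) → ∀ n : ℕ,
      |(∫ x, φ (T^[n] x) * ψ x ∂μ) - (∫ x, φ x ∂μ) * ∫ x, ψ x ∂μ|
        ≤ (Cφ + Kφ) * (Cψ + Kψ) * Φ n

/-!
Fix a scale `r` and a window `[1, n]`. A Lipschitz cutoff `ψ` of `S_r` that equals `1` on
`S_{r/2}` turns "the orbit misses `S_r` during the window" into "the Birkhoff sum `∑ ψ ∘ Tʲ`
vanishes", and Chebyshev bounds the probability of that by `Var / (n ∫ψ)²`. By stationarity the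
variance is a double sum of autocovariances `cov(ψ ∘ Tᵏ, ψ)`: the `O(n g)` terms with `k < g` are
at most `∫ψ`, the others are `≲ ‖ψ‖² Φ(g)`. At radii `r = e^{-k}` one has `∫ψ ≳ r^{d+ε}`; with
windows `n ≈ e^{(d+3ε)k}` and gaps `g ≈ e^{εk}` the superpolynomial decay makes the miss
probabilities summable, so by Borel–Cantelli almost every orbit eventually enters `S_{e^{-k}}`
within `n` steps. Monotonicity of `τ` in `r` covers the intermediate radii, and `ε → 0` along a
sequence.
-/

open ProbabilityTheory

section Stationary

variable {X : Type*} [MeasurableSpace X] {μ : Measure X} {T : X → X} {ψ : X → ℝ}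

lemma MeasureTheory.MeasurePreserving.integral_comp_iterate (hT : MeasurePreserving T μ μ)
    (hψ : Measurable ψ) (k : ℕ) : ∫ x, ψ (T^[k] x) ∂μ = ∫ x, ψ x ∂μ := by
  conv_rhs => rw [← (hT.iterate k).map_eq]
  exact (integral_map (hT.iterate k).aemeasurable hψ.aestronglyMeasurable).symm

lemma MeasureTheory.MeasurePreserving.covariance_comp_iterate (hT : MeasurePreserving T μ μ)
    (hψ : Measurable ψ) (i j : ℕ) :
    cov[ψ ∘ T^[i], ψ ∘ T^[j]; μ] = cov[ψ ∘ T^[Nat.dist i j], ψ; μ] := by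
  wlog hij : i ≤ j generalizing i j
  · rw [covariance_comm, this j i (by omega), Nat.dist_comm]
  obtain ⟨k, rfl⟩ := Nat.exists_eq_add_of_le hij
  have hdist : Nat.dist i (i + k) = k := by unfold Nat.dist; omega
  have hmap := (hT.iterate i).map_eq
  rw [covariance_comm, hdist, add_comm, Function.iterate_add, ← Function.comp_assoc]
  conv_rhs => rw [← hmap]
  exact (covariance_map
    (by rw [hmap]; exact (hψ.comp (hT.iterate k).measurable).aestronglyMeasurable)
    (by rw [hmap]; exact hψ.aestronglyMeasurable) (hT.iterate i).aemeasurable).symm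

lemma memLp_of_forall_mem_Icc [IsFiniteMeasure μ] {φ : X → ℝ} (hφ : Measurable φ)
    (h01 : ∀ x, φ x ∈ Set.Icc 0 1) (p : ℝ≥0∞) : MemLp φ p μ :=
  .of_bound hφ.aestronglyMeasurable 1 (ae_of_all _ fun x => by
    rw [Real.norm_eq_abs, abs_le]; constructor <;> linarith [(h01 x).1, (h01 x).2])

lemma covariance_comp_iterate_le_integral [IsProbabilityMeasure μ] (hT : MeasurePreserving T μ μ)
    (hψ : Measurable ψ) (hψ01 : ∀ x, ψ x ∈ Set.Icc 0 1) (k : ℕ) :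
    cov[ψ ∘ T^[k], ψ; μ] ≤ ∫ x, ψ x ∂μ := by
  have hψk : Measurable (ψ ∘ T^[k]) := hψ.comp (hT.iterate k).measurable
  have hψk01 : ∀ x, (ψ ∘ T^[k]) x ∈ Set.Icc 0 1 := fun x => hψ01 _
  rw [covariance_eq_sub (memLp_of_forall_mem_Icc hψk hψk01 2) (memLp_of_forall_mem_Icc hψ hψ01 2)]
  have hprod : ∫ x, (ψ ∘ T^[k] * ψ) x ∂μ ≤ ∫ x, ψ (T^[k] x) ∂μ :=
    integral_mono
      ((memLp_of_forall_mem_Icc hψk hψk01 2).integrable_mul (memLp_of_forall_mem_Icc hψ hψ01 2))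
      ((memLp_of_forall_mem_Icc hψk hψk01 1).integrable le_rfl)
      fun x => mul_le_of_le_one_right (hψk01 x).1 (hψ01 x).2
  have hmean : 0 ≤ ∫ x, ψ x ∂μ := integral_nonneg fun x => (hψ01 x).1
  simp only [Function.comp_apply, hT.integral_comp_iterate hψ] at hprod ⊢
  nlinarith

open Finset in
lemma variance_sum_comp_iterate_le [IsProbabilityMeasure μ] (hT : MeasurePreserving T μ μ)
    (hψ : Measurable ψ) (hψ01 : ∀ x, ψ x ∈ Set.Icc 0 1) {g : ℕ} {D : ℝ} (hD0 : 0 ≤ D)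
    (hD : ∀ k, g ≤ k → cov[ψ ∘ T^[k], ψ; μ] ≤ D) (s : Finset ℕ) :
    Var[∑ i ∈ s, ψ ∘ T^[i]; μ] ≤ #s * (2 * g * ∫ x, ψ x ∂μ + #s * D) := by
  set a := ∫ x, ψ x ∂μ
  have ha : 0 ≤ a := integral_nonneg fun x => (hψ01 x).1
  have hterm (i j : ℕ) :
      cov[ψ ∘ T^[i], ψ ∘ T^[j]; μ] ≤ (if Nat.dist i j < g then a else 0) + D := by
    rw [hT.covariance_comp_iterate hψ]
    split_ifs with h
    · linarith [covariance_comp_iterate_le_integral hT hψ hψ01 (Nat.dist i j)]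
    · linarith [hD _ (not_lt.1 h)]
  have hnear (i : ℕ) : #{j ∈ s | Nat.dist i j < g} ≤ 2 * g :=
    calc #{j ∈ s | Nat.dist i j < g} ≤ #(Ico (i - g) (i + g)) := card_le_card <| by
          intro j hj
          rw [Finset.mem_filter] at hj
          unfold Nat.dist at hj
          rw [Finset.mem_Ico]; omega
      _ ≤ 2 * g := by rw [Nat.card_Ico]; omega
  rw [variance_sum' fun i _ =>
    memLp_of_forall_mem_Icc (hψ.comp (hT.iterate i).measurable) (fun x => hψ01 _) 2]
  calc ∑ i ∈ s, ∑ j ∈ s, cov[ψ ∘ T^[i], ψ ∘ T^[j]; μ]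
      ≤ ∑ i ∈ s, ∑ j ∈ s, ((if Nat.dist i j < g then a else 0) + D) := by
        gcongr with i _ j _; exact hterm i j
    _ = ∑ i ∈ s, (#{j ∈ s | Nat.dist i j < g} * a + #s * D) := by
        simp [sum_add_distrib, ← sum_filter]
    _ ≤ ∑ i ∈ s, (2 * g * a + #s * D) := by
        gcongr with i; exact_mod_cast hnear i
    _ = #s * (2 * g * a + #s * D) := by rw [sum_const, nsmul_eq_mul]

open Finset in
lemma measureReal_forall_iterate_notMem_le [IsProbabilityMeasure μ] (hT : MeasurePreserving T μ μ)
    (hψ : Measurable ψ) (hψ01 : ∀ x, ψ x ∈ Set.Icc 0 1) {S : Set X} (hψS : ∀ x ∉ S, ψ x = 0)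
    (ha : 0 < ∫ x, ψ x ∂μ) {g : ℕ} {D : ℝ} (hD0 : 0 ≤ D)
    (hD : ∀ k, g ≤ k → cov[ψ ∘ T^[k], ψ; μ] ≤ D) {s : Finset ℕ} (hs : s.Nonempty) :
    μ.real {x | ∀ j ∈ s, T^[j] x ∉ S} ≤ 2 * g / (#s * ∫ x, ψ x ∂μ) + D / (∫ x, ψ x ∂μ) ^ 2 := by
  set a := ∫ x, ψ x ∂μ
  set Y := ∑ i ∈ s, ψ ∘ T^[i]
  have hmem (i : ℕ) : MemLp (ψ ∘ T^[i]) 2 μ :=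
    memLp_of_forall_mem_Icc (hψ.comp (hT.iterate i).measurable) (fun x => hψ01 _) 2
  have hmean : μ[Y] = #s * a := by
    simp only [Y, Finset.sum_apply]
    rw [integral_finsetSum _ fun i _ => (hmem i).integrable one_le_two]
    simp [hT.integral_comp_iterate hψ, a]
  have hsa : 0 < (#s : ℝ) * a := by have := hs.card_pos; positivity
  have hnoHit : {x | ∀ j ∈ s, T^[j] x ∉ S} ⊆ {x | #s * a ≤ |Y x - μ[Y]|} := fun x hx => by
    have hY : Y x = 0 := by
      simp only [Y, Finset.sum_apply, Function.comp_apply]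
      exact sum_eq_zero fun j hj => hψS _ (hx j hj)
    simp [hY, hmean, abs_of_pos hsa]
  have hcheb := (measure_mono hnoHit).trans
    (meas_ge_le_variance_div_sq (memLp_finsetSum' _ fun i _ => hmem i) hsa)
  calc μ.real {x | ∀ j ∈ s, T^[j] x ∉ S}
      ≤ Var[Y; μ] / (#s * a) ^ 2 :=
        ENNReal.toReal_le_of_le_ofReal (div_nonneg (variance_nonneg _ _) (sq_nonneg _)) hcheb
    _ ≤ #s * (2 * g * a + #s * D) / (#s * a) ^ 2 := by
        gcongr; exact variance_sum_comp_iterate_le hT hψ hψ01 hD0 hD s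
    _ = 2 * g / (#s * a) + D / a ^ 2 := by
        have : (#s : ℝ) ≠ 0 := by have := hs.card_pos; positivity
        field_simp

end Stationary

section Cutoff

variable {X : Type*} {f : X → ℝ} {r : ℝ}

noncomputable def sublevelCutoff (f : X → ℝ) (r : ℝ) (x : X) : ℝ :=
  max 0 (min 1 (2 - 2 * f x / r))

lemma sublevelCutoff_mem_Icc (x : X) : sublevelCutoff f r x ∈ Set.Icc 0 1 :=
  ⟨le_max_left _ _, max_le zero_le_one (min_le_left _ _)⟩

lemma sublevelCutoff_eq_zero (hr : 0 < r) {x : X} (hx : r < f x) : sublevelCutoff f r x = 0 := by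
  have : 2 - 2 * f x / r < 0 := by rw [sub_neg, lt_div_iff₀ hr]; linarith
  simp [sublevelCutoff, min_eq_right_of_lt (this.trans one_pos), this.le]

lemma sublevelCutoff_eq_one (hr : 0 < r) {x : X} (hx : f x ≤ r / 2) : sublevelCutoff f r x = 1 := by
  have : 1 ≤ 2 - 2 * f x / r := by rw [le_sub_comm, div_le_iff₀ hr]; linarith
  simp [sublevelCutoff, min_eq_left this]

lemma LipschitzWith.sublevelCutoff [PseudoMetricSpace X] {ℓ : ℝ≥0} (hf : LipschitzWith ℓ f)
    (hr : 0 ≤ r) : LipschitzWith (Real.toNNReal (2 / r) * ℓ) (sublevelCutoff f r) := by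
  have haffine : LipschitzWith (Real.toNNReal (2 / r) * ℓ) fun x => 2 - 2 * f x / r :=
    .of_dist_le_mul fun x y => by
      have hdist : dist (2 - 2 * f x / r) (2 - 2 * f y / r) = 2 / r * dist (f x) (f y) := by
        rw [Real.dist_eq, Real.dist_eq, abs_sub_comm (f x),
          show 2 - 2 * f x / r - (2 - 2 * f y / r) = 2 / r * (f y - f x) by ring, abs_mul,
          abs_of_nonneg (by positivity : 0 ≤ 2 / r)]
      rw [hdist, NNReal.coe_mul, Real.coe_toNNReal _ (by positivity), mul_assoc]
      exact mul_le_mul_of_nonneg_left (hf.dist_le_mul x y) (by positivity)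
  exact (haffine.const_min 1).const_max 0

lemma Continuous.sublevelCutoff [TopologicalSpace X] (hf : Continuous f) :
    Continuous (sublevelCutoff f r) := by
  unfold _root_.sublevelCutoff; fun_prop

lemma measureReal_sublevel_le_integral_sublevelCutoff [TopologicalSpace X] [MeasurableSpace X]
    [OpensMeasurableSpace X] {μ : Measure X} [IsFiniteMeasure μ] (hf : Continuous f)
    (hr : 0 < r) : μ.real {y | f y ≤ r / 2} ≤ ∫ x, sublevelCutoff f r x ∂μ := by
  have hmeas : MeasurableSet {y | f y ≤ r / 2} := measurableSet_le hf.measurable measurable_const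
  rw [← integral_indicator_one hmeas]
  refine integral_mono ((integrable_const 1).indicator hmeas) ?_ fun x => ?_
  · exact (memLp_of_forall_mem_Icc hf.sublevelCutoff.measurable sublevelCutoff_mem_Icc 1).integrable
      le_rfl
  · by_cases hx : f x ≤ r / 2
    · simp [hx, sublevelCutoff_eq_one hr hx]
    · simp [hx, (sublevelCutoff_mem_Icc x).1]

end Cutoff

section HitTime

variable {X : Type*} {T : X → X} {S S' : Set X} {x : X}

lemma hitTime_le_of_iterate_mem {j : ℕ} (hj : 0 < j) (hx : T^[j] x ∈ S) : hitTime T S x ≤ j :=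
  sInf_le ⟨j, ⟨hj, hx⟩, rfl⟩

lemma hitTime_anti (h : S ⊆ S') : hitTime T S' x ≤ hitTime T S x :=
  sInf_le_sInf (image_mono fun _ hn => ⟨hn.1, h hn.2⟩)

lemma antitone_hitTime_sublevel (f : X → ℝ) :
    Antitone fun r => (hitTime T {y | f y ≤ r} x : ℝ≥0∞) := fun _ _ hrs =>
  ENat.toENNReal_le.2 (hitTime_anti fun _ hy => le_trans hy hrs)

end HitTime

def LipschitzCovarianceBound {X : Type*} [PseudoMetricSpace X] [MeasurableSpace X]
    (μ : Measure X) (T : X → X) (Φ : ℕ → ℝ) : Prop :=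
  ∀ (ψ : X → ℝ) (K : ℝ≥0), LipschitzWith K ψ → (∀ x, ψ x ∈ Set.Icc 0 1) → ∀ k,
    cov[ψ ∘ T^[k], ψ; μ] ≤ (1 + K) ^ 2 * Φ k

lemma SuperpolynomialDecayOfCorrelations.exists_lipschitzCovarianceBound {X : Type*}
    [MetricSpace X] [MeasurableSpace X] [OpensMeasurableSpace X] {μ : Measure X}
    [IsProbabilityMeasure μ] {T : X → X} (hT : MeasurePreserving T μ μ)
    (h : SuperpolynomialDecayOfCorrelations μ T) :
    ∃ Φ : ℕ → ℝ, (∀ β : ℝ, 0 < β → ∀ᶠ n : ℕ in atTop, Φ n ≤ ((n : ℝ) ^ β)⁻¹) ∧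
      LipschitzCovarianceBound μ T Φ := by
  obtain ⟨Φ, -, hdecay, hcorr⟩ := h
  refine ⟨Φ, fun β hβ => ?_, fun ψ K hψ hψ01 k => ?_⟩
  · filter_upwards [(hdecay β hβ).eventually_lt_const one_pos, eventually_ge_atTop 1]
      with n hn hn1
    have : (0 : ℝ) < (n : ℝ) ^ β := Real.rpow_pos_of_pos (by exact_mod_cast hn1 : (0 : ℝ) < n) β
    rw [inv_eq_one_div, le_div_iff₀ this]
    linarith
  · have hψm := hψ.continuous.measurable
    have hψk : Measurable (ψ ∘ T^[k]) := hψm.comp (hT.iterate k).measurable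
    have habs (x : X) : |ψ x| ≤ 1 := abs_le.2 ⟨by linarith [(hψ01 x).1], (hψ01 x).2⟩
    rw [covariance_eq_sub (memLp_of_forall_mem_Icc hψk (fun x => hψ01 _) 2)
      (memLp_of_forall_mem_Icc hψm hψ01 2)]
    simp only [Pi.mul_apply, Function.comp_apply, hT.integral_comp_iterate hψm]
    calc _ ≤ _ := le_abs_self _
      _ ≤ _ := hcorr ψ ψ K K 1 1 hψ hψ habs habs k
      _ = _ := by ring

open Real in
lemma limsup_log_div_neg_log_le {τ : ℝ → ℝ≥0∞} (hτ : Antitone τ) {C c : ℝ} (hC : 0 < C)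
    (hc : 0 ≤ c) (h : ∀ᶠ k : ℕ in atTop, τ (exp (-k)) ≤ ENNReal.ofReal (C * exp (c * k))) :
    limsup (fun r => ENNReal.log (τ r) / ((-Real.log r : ℝ) : EReal)) (𝓝[>] 0) ≤ c := by
  obtain ⟨K, hK⟩ := eventually_atTop.1 h
  refine EReal.le_of_forall_lt_iff_le.1 fun η hη => limsup_le_of_le (by isBoundedDefault) ?_
  have hcη : c < η := by exact_mod_cast hη
  have hL : Tendsto (fun r => -Real.log r) (𝓝[>] 0) atTop :=
    tendsto_neg_atBot_atTop.comp tendsto_log_nhdsGT_zero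
  filter_upwards [self_mem_nhdsWithin,
    hL.eventually_ge_atTop (max (max (K : ℝ) 1) ((Real.log C + c) / (η - c)))]
    with r (hr : 0 < r) hLr
  set L := -Real.log r
  have hLK : (K : ℝ) ≤ L := (le_max_left _ _).trans ((le_max_left _ _).trans hLr)
  have hL1 : 1 ≤ L := (le_max_right _ _).trans ((le_max_left _ _).trans hLr)
  have hLη : Real.log C + c ≤ (η - c) * L := by
    rw [← div_le_iff₀' (by linarith)]; exact (le_max_right _ _).trans hLr
  have hrj : exp (-⌈L⌉₊) ≤ r := by
    rw [← exp_log hr, exp_le_exp, neg_le]; exact Nat.le_ceil L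
  have hτr : τ r ≤ ENNReal.ofReal (C * exp (c * (L + 1))) :=
    (hτ hrj).trans <| (hK _ (Nat.cast_le.1 (hLK.trans (Nat.le_ceil L)))).trans <|
      ENNReal.ofReal_le_ofReal (by gcongr; exact (Nat.ceil_lt_add_one (by linarith)).le)
  have hlog : ENNReal.log (τ r) ≤ ((Real.log C + c * (L + 1) : ℝ) : EReal) := by
    refine (ENNReal.log_monotone hτr).trans (le_of_eq ?_)
    rw [ENNReal.log_ofReal_of_pos (by positivity), Real.log_mul hC.ne' (exp_pos _).ne',
      Real.log_exp]
  calc ENNReal.log (τ r) / (L : EReal)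
      ≤ ((Real.log C + c * (L + 1) : ℝ) : EReal) / L :=
        EReal.div_le_div_right_of_nonneg (by exact_mod_cast (by linarith : (0 : ℝ) ≤ L)) hlog
    _ = (((Real.log C + c * (L + 1)) / L : ℝ) : EReal) := (EReal.coe_div _ _).symm
    _ ≤ η := by
        exact_mod_cast (div_le_iff₀ (by linarith)).2 (by linarith)

lemma nonneg_of_tendsto_log_div_log {F : ℝ → ℝ≥0∞} {d : ℝ} (hF1 : ∀ r, F r ≤ 1)
    (hF : Tendsto (fun r => ENNReal.log (F r) / ((Real.log r : ℝ) : EReal)) (𝓝[>] 0) (𝓝 d)) :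
    0 ≤ d := by
  have hnonneg : ∀ᶠ r in 𝓝[>] (0 : ℝ),
      (0 : EReal) ≤ ENNReal.log (F r) / ((Real.log r : ℝ) : EReal) := by
    filter_upwards [Ioo_mem_nhdsGT one_pos] with r hr
    refine EReal.div_nonneg_of_nonpos_of_nonpos ?_ ?_
    · simpa using ENNReal.log_monotone (hF1 r)
    · exact_mod_cast (Real.log_neg hr.1 hr.2).le
  exact_mod_cast ge_of_tendsto hF hnonneg

lemma eventually_rpow_le_of_tendsto_log_div_log {F : ℝ → ℝ≥0∞} {d p : ℝ}
    (hF : Tendsto (fun r => ENNReal.log (F r) / ((Real.log r : ℝ) : EReal)) (𝓝[>] 0) (𝓝 d))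
    (hp : d < p) : ∀ᶠ r in 𝓝[>] 0, ENNReal.ofReal (r ^ p) ≤ F r := by
  filter_upwards [hF.eventually_lt_const (by exact_mod_cast hp : (d : EReal) < p),
    Ioo_mem_nhdsGT one_pos] with r hr hr01
  by_contra! hlt
  have hlogr : Real.log r < 0 := Real.log_neg hr01.1 hr01.2
  have hlog : ENNReal.log (F r) ≤ ((p * Real.log r : ℝ) : EReal) := by
    rw [← Real.log_rpow hr01.1, ← ENNReal.log_ofReal_of_pos (Real.rpow_pos_of_pos hr01.1 p)]
    exact ENNReal.log_monotone hlt.le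
  have := EReal.div_le_div_right_of_nonpos
    (by exact_mod_cast hlogr.le : ((Real.log r : ℝ) : EReal) ≤ 0) hlog
  rw [← EReal.coe_div, mul_div_assoc, div_self hlogr.ne, mul_one] at this
  exact (this.trans_lt hr).false

lemma ae_eventually_notMem_of_summable_measureReal {α : Type*} [MeasurableSpace α]
    {μ : Measure α} [IsFiniteMeasure μ] {s : ℕ → Set α} (hs : Summable fun n => μ.real (s n)) :
    ∀ᵐ x ∂μ, ∀ᶠ n in atTop, x ∉ s n := by
  refine ae_eventually_notMem ?_
  have : ∑' n, μ (s n) = ENNReal.ofReal (∑' n, μ.real (s n)) := by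
    rw [ENNReal.ofReal_tsum_of_nonneg (fun _ => measureReal_nonneg) hs]
    exact tsum_congr fun n => (ENNReal.ofReal_toReal (measure_ne_top μ _)).symm
  exact this ▸ ENNReal.ofReal_ne_top

section Scales

variable {X : Type*} [MetricSpace X] [MeasurableSpace X] [OpensMeasurableSpace X]
  {μ : Measure X} [IsProbabilityMeasure μ] {T : X → X} {ℓ : ℝ≥0} {f : X → ℝ} {Φ : ℕ → ℝ}

lemma measureReal_forall_iterate_notMem_sublevel_le (hT : MeasurePreserving T μ μ)
    (hf : LipschitzWith ℓ f)
    (hcov : LipschitzCovarianceBound μ T Φ)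
    {r : ℝ} (hr : 0 < r) {g : ℕ} {D : ℝ} (hD0 : 0 ≤ D) (hD : ∀ k, g ≤ k → Φ k ≤ D)
    {m : ℝ} (hm : 0 < m) (hmr : m ≤ μ.real {y | f y ≤ r / 2}) {n : ℕ} (hn : 0 < n) :
    μ.real {x | ∀ j ∈ Finset.Icc 1 n, T^[j] x ∉ {y | f y ≤ r}}
      ≤ 2 * g / (n * m) + (1 + 2 / r * ℓ) ^ 2 * D / m ^ 2 := by
  set ψ := sublevelCutoff f r
  have hψL := hf.sublevelCutoff hr.le
  have hK : ((Real.toNNReal (2 / r) * ℓ : ℝ≥0) : ℝ) = 2 / r * ℓ := by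
    rw [NNReal.coe_mul, Real.coe_toNNReal _ (by positivity)]
  have hma : m ≤ ∫ x, ψ x ∂μ :=
    hmr.trans (measureReal_sublevel_le_integral_sublevelCutoff hf.continuous hr)
  have hcovD (k : ℕ) (hk : g ≤ k) : cov[ψ ∘ T^[k], ψ; μ] ≤ (1 + 2 / r * ℓ) ^ 2 * D := by
    rw [← hK]
    exact (hcov ψ _ hψL sublevelCutoff_mem_Icc k).trans (by gcongr; exact hD k hk)
  have hbound := measureReal_forall_iterate_notMem_le hT hψL.continuous.measurable
    sublevelCutoff_mem_Icc (fun x hx => sublevelCutoff_eq_zero hr (not_le.1 hx))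
    (hm.trans_le hma) (by positivity) hcovD (Finset.nonempty_Icc.2 hn)
  rw [Nat.card_Icc, Nat.add_sub_cancel] at hbound
  refine hbound.trans (add_le_add ?_ ?_) <;> gcongr

open Real in
lemma measureReal_forall_iterate_notMem_sublevel_exp_le (hT : MeasurePreserving T μ μ)
    (hf : LipschitzWith ℓ f)
    (hcov : LipschitzCovarianceBound μ T Φ)
    {p ε β : ℝ} (hε : 0 < ε) (hβ : 0 < β) (hεβ : ε * β = 3 + 2 * p) {k : ℕ}
    (hμk : ENNReal.ofReal ((exp (-k) / 2) ^ p) ≤ μ {y | f y ≤ exp (-k) / 2})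
    (hΦk : ∀ j, ⌈exp (ε * k)⌉₊ ≤ j → Φ j ≤ ((j : ℝ) ^ β)⁻¹) :
    μ.real {x | ∀ j ∈ Finset.Icc 1 ⌈exp ((p + 2 * ε) * k)⌉₊, T^[j] x ∉ {y | f y ≤ exp (-k)}}
      ≤ 4 * 2 ^ p * exp (-(ε * k)) + (1 + 2 * ℓ) ^ 2 * (2 ^ p) ^ 2 * exp (-k) := by
  set t : ℝ := (k : ℝ)
  set g := ⌈exp (ε * t)⌉₊
  have hg : exp (ε * t) ≤ g := Nat.le_ceil _
  have hg2 : (g : ℝ) ≤ 2 * exp (ε * t) :=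
    Nat.ceil_le_two_mul (by linarith [one_le_exp (by positivity : 0 ≤ ε * t)])
  have hgβ : exp ((3 + 2 * p) * t) ≤ (g : ℝ) ^ β := by
    rw [← hεβ, mul_comm ε, mul_assoc, mul_comm, exp_mul]
    exact rpow_le_rpow (exp_pos _).le hg hβ.le
  have hD (j : ℕ) (hj : g ≤ j) : Φ j ≤ ((g : ℝ) ^ β)⁻¹ :=
    (hΦk j hj).trans (inv_anti₀ ((exp_pos _).trans_le hgβ)
      (rpow_le_rpow (Nat.cast_nonneg _) (Nat.cast_le.2 hj) hβ.le))
  have hm : (exp (-t) / 2) ^ p = exp (-(t * p)) / 2 ^ p := by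
    rw [div_rpow (exp_pos _).le zero_le_two, ← exp_mul, neg_mul]
  have hmμ : exp (-(t * p)) / 2 ^ p ≤ μ.real {y | f y ≤ exp (-t) / 2} := by
    rw [← hm]; exact (ENNReal.ofReal_le_iff_le_toReal (measure_ne_top μ _)).1 hμk
  refine (measureReal_forall_iterate_notMem_sublevel_le hT hf hcov (exp_pos _) (by positivity)
    hD (by positivity) hmμ (Nat.ceil_pos.2 (exp_pos _))).trans (add_le_add ?_ ?_)
  · calc 2 * g / (⌈exp ((p + 2 * ε) * t)⌉₊ * (exp (-(t * p)) / 2 ^ p))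
        ≤ 2 * (2 * exp (ε * t)) / (exp ((p + 2 * ε) * t) * (exp (-(t * p)) / 2 ^ p)) := by
          gcongr; exact Nat.le_ceil _
      _ = 4 * 2 ^ p * exp (-(ε * t)) := by
          have hexp : exp (ε * t) = exp (-(ε * t)) * (exp ((p + 2 * ε) * t) * exp (-(t * p))) := by
            simp only [← exp_add]; ring_nf
          rw [hexp]
          field_simp
          ring
  · have hK : 1 + 2 / exp (-t) * ℓ ≤ (1 + 2 * ℓ) * exp t := by
      rw [exp_neg, div_inv_eq_mul]
      nlinarith [one_le_exp (by positivity : 0 ≤ t), ℓ.coe_nonneg]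
    calc (1 + 2 / exp (-t) * ℓ) ^ 2 * ((g : ℝ) ^ β)⁻¹ / (exp (-(t * p)) / 2 ^ p) ^ 2
        ≤ ((1 + 2 * ℓ) * exp t) ^ 2 * (exp ((3 + 2 * p) * t))⁻¹ / (exp (-(t * p)) / 2 ^ p) ^ 2 := by
          gcongr
      _ = (1 + 2 * ℓ) ^ 2 * (2 ^ p) ^ 2 * exp (-t) := by
          field_simp
          simp only [← exp_nat_mul, ← exp_add]
          ring_nf

open Real in
lemma ae_eventually_hitTime_sublevel_exp_le (hT : MeasurePreserving T μ μ)
    (hmix : SuperpolynomialDecayOfCorrelations μ T) (hf : LipschitzWith ℓ f) {p : ℝ} (hp : 0 ≤ p)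
    (hμ : ∀ᶠ s in 𝓝[>] 0, ENNReal.ofReal (s ^ p) ≤ μ {y | f y ≤ s}) {ε : ℝ} (hε : 0 < ε) :
    ∀ᵐ x ∂μ, ∀ᶠ k : ℕ in atTop,
      (hitTime T {y | f y ≤ exp (-k)} x : ℝ≥0∞) ≤ ENNReal.ofReal (2 * exp ((p + 2 * ε) * k)) := by
  obtain ⟨Φ, hdecay, hcov⟩ := hmix.exists_lipschitzCovarianceBound hT
  -- the correlation term is `≈ (e^k)² g^{-β} (e^{kp})² = e^{(2 + 2p - εβ)k}`
  set β := (3 + 2 * p) / ε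
  have hβ : 0 < β := by positivity
  have hεβ : ε * β = 3 + 2 * p := mul_div_cancel₀ _ hε.ne'
  set E : ℕ → Set X := fun k =>
    {x | ∀ j ∈ Finset.Icc 1 ⌈exp ((p + 2 * ε) * k)⌉₊, T^[j] x ∉ {y | f y ≤ exp (-k)}}
  have hscale : Tendsto (fun k : ℕ => exp (-k) / 2) atTop (𝓝[>] 0) := by
    refine tendsto_nhdsWithin_iff.2 ⟨?_, .of_forall fun k => mem_Ioi.2 (by positivity)⟩
    simpa using (tendsto_exp_neg_atTop_nhds_zero.comp tendsto_natCast_atTop_atTop).div_const 2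
  have hgap : Tendsto (fun k : ℕ => ⌈exp (ε * k)⌉₊) atTop atTop :=
    tendsto_nat_ceil_atTop.comp (tendsto_exp_atTop.comp
      (tendsto_natCast_atTop_atTop.const_mul_atTop hε))
  have hΦ : ∀ᶠ k : ℕ in atTop, ∀ j, ⌈exp (ε * k)⌉₊ ≤ j → Φ j ≤ ((j : ℝ) ^ β)⁻¹ := by
    obtain ⟨N, hN⟩ := eventually_atTop.1 (hdecay β hβ)
    filter_upwards [hgap.eventually_ge_atTop N] with k hk j hj using hN j (hk.trans hj)
  have hE : ∀ᶠ k : ℕ in atTop,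
      μ.real (E k) ≤ 4 * 2 ^ p * exp (-(ε * k)) + (1 + 2 * ℓ) ^ 2 * (2 ^ p) ^ 2 * exp (-k) := by
    filter_upwards [hscale.eventually hμ, hΦ] with k hμk hΦk using
      measureReal_forall_iterate_notMem_sublevel_exp_le hT hf hcov hε hβ hεβ hμk hΦk
  have hsum : Summable fun k => μ.real (E k) := by
    have hgeom : Summable fun k : ℕ => exp (-(ε * k)) := by
      simpa [mul_comm] using summable_exp_nat_mul_iff.2 (neg_neg_of_pos hε)
    refine Summable.of_norm_bounded_eventually_nat ((hgeom.mul_left (4 * 2 ^ p)).add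
      (summable_exp_neg_nat.mul_left ((1 + 2 * (ℓ : ℝ)) ^ 2 * (2 ^ p) ^ 2)))
      (hE.mono fun k hk => ?_)
    rwa [Real.norm_of_nonneg measureReal_nonneg]
  filter_upwards [ae_eventually_notMem_of_summable_measureReal hsum] with x hx
  filter_upwards [hx] with k (hk : x ∉ E k)
  simp only [E, mem_ofPred_eq, not_forall, not_not, exists_prop, Finset.mem_Icc] at hk
  obtain ⟨j, hj, hjS⟩ := hk
  calc (hitTime T {y | f y ≤ exp (-(k : ℝ))} x : ℝ≥0∞) ≤ (j : ℝ≥0∞) := by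
        rw [← ENat.toENNReal_coe]
        exact ENat.toENNReal_le.2 (hitTime_le_of_iterate_mem hj.1 hjS)
    _ ≤ ENNReal.ofReal (2 * exp ((p + 2 * ε) * k)) := by
        rw [← ENNReal.ofReal_natCast]
        exact ENNReal.ofReal_le_ofReal ((Nat.cast_le.2 hj.2).trans (Nat.ceil_le_two_mul (by
          linarith [one_le_exp (by positivity : 0 ≤ (p + 2 * ε) * k)])))

end Scales

theorem hitting_limsup_le_dim_general
    {X : Type*} [MetricSpace X] [MeasurableSpace X] [BorelSpace X]
    (μ : Measure X) [IsProbabilityMeasure μ]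
    (T : X → X) (hT : MeasurePreserving T μ μ)
    (hmix : SuperpolynomialDecayOfCorrelations μ T)
    (ℓ : ℝ≥0) (f : X → ℝ) (hf : LipschitzWith ℓ f)
    (d : ℝ)
    (hd : Tendsto (fun r : ℝ => ENNReal.log (μ {y | f y ≤ r}) / ((Real.log r : ℝ) : EReal))
      (𝓝[>] 0) (𝓝 (d : EReal))) :
    ∀ᵐ x ∂μ,
      limsup (fun r : ℝ =>
          ENNReal.log ((hitTime T {y | f y ≤ r} x : ℝ≥0∞)) / ((- Real.log r : ℝ) : EReal))
        (𝓝[>] 0) ≤ (d : EReal) := by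
  have hd0 : 0 ≤ d := nonneg_of_tendsto_log_div_log (fun _ => prob_le_one) hd
  have hscale (m : ℕ) : ∀ᵐ x ∂μ, limsup (fun r : ℝ =>
      ENNReal.log ((hitTime T {y | f y ≤ r} x : ℝ≥0∞)) / ((- Real.log r : ℝ) : EReal))
        (𝓝[>] 0) ≤ ((d + 3 * (1 / (m + 1)) : ℝ) : EReal) := by
    have hε : (0 : ℝ) < 1 / (m + 1) := by positivity
    filter_upwards [ae_eventually_hitTime_sublevel_exp_le hT hmix hf (by positivity)
      (eventually_rpow_le_of_tendsto_log_div_log hd (lt_add_of_pos_right d hε)) hε] with x hx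
    convert limsup_log_div_neg_log_le (antitone_hitTime_sublevel f) two_pos (by positivity) hx
      using 2
    ring
  filter_upwards [ae_all_iff.2 hscale] with x hx
  refine EReal.le_of_forall_lt_iff_le.1 fun z hz => ?_
  have hdz : 0 < (z - d) / 3 := by
    have : d < z := by exact_mod_cast hz
    linarith
  obtain ⟨m, hm⟩ := exists_nat_one_div_lt hdz
  exact (hx m).trans (by exact_mod_cast (by linarith : d + 3 * (1 / (m + 1)) ≤ z))

/-- Upper-bound half of the logarithm law: if the system has
superpolynomial decay of correlations with respect to Lipschitz observables, `f : X → [0,∞)`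
is `ℓ`-Lipschitz with sublevel sets `S_r = {x : f x ≤ r}`, and
`d(f) = lim_{r→0} log μ(S_r)/log r` exists, then for `μ`-a.e. `x`,
`limsup_{r→0} log τ(x,S_r)/(-log r) ≤ d(f)`. -/
theorem hitting_limsup_le_dim
    {X : Type*} [MetricSpace X] [MeasurableSpace X] [BorelSpace X]
    (μ : Measure X) [IsProbabilityMeasure μ]
    (T : X → X) (hT : MeasurePreserving T μ μ)
    (hmix : SuperpolynomialDecayOfCorrelations μ T)
    (ℓ : ℝ≥0) (f : X → ℝ) (hf : LipschitzWith ℓ f) (hf0 : ∀ x, 0 ≤ f x)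
    (d : ℝ)
    (hd : Tendsto (fun r : ℝ => ENNReal.log (μ {y | f y ≤ r}) / ((Real.log r : ℝ) : EReal))
      (𝓝[>] 0) (𝓝 (d : EReal))) :
    ∀ᵐ x ∂μ,
      limsup (fun r : ℝ =>
          ENNReal.log ((hitTime T {y | f y ≤ r} x : ℝ≥0∞)) / ((- Real.log r : ℝ) : EReal))
        (𝓝[>] 0) ≤ (d : EReal) :=
  hitting_limsup_le_dim_general μ T hT hmix ℓ f hf d hd
end

section
/- Let (X, T, μ) be an ergodic measure-preserving dynamical system with μ a finite, nonatomic measure, and let f : X → [0,∞) be measurable with μ(S_r) > 0 for all r > 0, where S_r = {x : f(x) ≤ r}. Suppose that for μ-almost every x, liminf_{r→0} log τ(x, S_r)/(−log r) > limsup_{r→0} log μ(S_r)/log r. Then the system has trivial return time statistics in the sets S_r: for every t > 0, lim_{r→0} μ({x ∈ S_r : τ(x, S_r) ≥ t/μ(S_r)}) / μ(S_r) = 0 (in particular the limit exists and equals 0 for each t). -/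
open Filter MeasureTheory Set Topology ENNReal

/-!
Write `τ = τ(·, S)`. Since `T` preserves `μ`, `T⁻¹{τ > k}` is the disjoint union of `{τ > k + 1}`
and `T⁻¹(S ∩ {τ > k})`, so `μ{τ ≤ n} = ∑_{k<n} μ(S ∩ {τ > k}) ≥ n μ(S ∩ {τ ≥ n})`. Taking
`n = ⌈t / μ(S_r)⌉` bounds the ratio in question by `μ{τ_r ≤ ⌈t / μ(S_r)⌉} / t`.

Choose `q₁ < q₂` strictly between the two exponents. For a.e. `x`, eventually `μ(S_r) > r ^ q₁`
and `τ(x, S_r) > r ^ (-q₂)`, so `τ(x, S_r) > c / μ(S_r)` for every constant `c`; hence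
`τ(x, S_r)` eventually exceeds `⌈t / μ(S_r)⌉`, and `μ{τ_r ≤ ⌈t / μ(S_r)⌉} → 0` by dominated
convergence.
-/

section Exponents

variable {x : ℝ≥0∞} {q r : ℝ}

lemma ofReal_rpow_lt_of_mul_log_lt (hr : 0 < r) (h : ((q * Real.log r : ℝ) : EReal) < log x) :
    ENNReal.ofReal (r ^ q) < x := by
  rwa [← log_lt_log_iff, log_ofReal_of_pos (Real.rpow_pos_of_pos hr q), Real.log_rpow hr]

lemma ofReal_rpow_lt_of_log_div_log_lt (hr₀ : 0 < r) (hr₁ : r < 1)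
    (h : log x / (Real.log r : EReal) < q) : ENNReal.ofReal (r ^ q) < x := by
  have hlog : (Real.log r : EReal) < 0 := by exact_mod_cast Real.log_neg hr₀ hr₁
  refine ofReal_rpow_lt_of_mul_log_lt hr₀
    ((EReal.strictAnti_div_right_of_neg hlog (EReal.coe_ne_bot _)).lt_iff_gt.1 ?_)
  rwa [← EReal.coe_div, mul_div_cancel_right₀ q (Real.log_neg hr₀ hr₁).ne]

lemma ofReal_rpow_neg_lt_of_lt_log_div_neg_log (hr₀ : 0 < r) (hr₁ : r < 1)
    (h : (q : EReal) < log x / ((-Real.log r : ℝ) : EReal)) : ENNReal.ofReal (r ^ (-q)) < x := by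
  have hlog : ((-Real.log r : ℝ) : EReal) > 0 := by exact_mod_cast neg_pos.2 (Real.log_neg hr₀ hr₁)
  rw [EReal.lt_div_iff hlog (EReal.coe_ne_top _), ← EReal.coe_mul, mul_neg, ← neg_mul] at h
  exact ofReal_rpow_lt_of_mul_log_lt hr₀ h

lemma eventually_div_lt_of_limsup_lt_liminf {a b : ℝ → ℝ≥0∞}
    (h : limsup (fun r => log (a r) / ((Real.log r : ℝ) : EReal)) (𝓝[>] 0) <
      liminf (fun r => log (b r) / ((-Real.log r : ℝ) : EReal)) (𝓝[>] 0))
    {c : ℝ≥0∞} (hc : c ≠ ⊤) : ∀ᶠ r in 𝓝[>] 0, c / a r < b r := by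
  obtain ⟨q₂, hq₂, hq₂b⟩ := EReal.exists_between_coe_real h
  obtain ⟨q₁, hq₁a, hq₁₂⟩ := EReal.exists_between_coe_real hq₂
  have hq : q₁ - q₂ < 0 := sub_neg.2 (EReal.coe_lt_coe_iff.1 hq₁₂)
  filter_upwards [eventually_lt_of_limsup_lt hq₁a, eventually_lt_of_lt_liminf hq₂b,
    Ioo_mem_nhdsGT one_pos, (tendsto_rpow_neg_nhdsGT_zero hq).eventually_gt_atTop c.toReal]
    with r ha hb ⟨hr₀, hr₁⟩ hcr
  have hconst : c.toReal * r ^ (-q₁) < r ^ (-q₂) := calc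
    c.toReal * r ^ (-q₁) < r ^ (q₁ - q₂) * r ^ (-q₁) :=
      mul_lt_mul_of_pos_right hcr (Real.rpow_pos_of_pos hr₀ _)
    _ = r ^ (-q₂) := by rw [← Real.rpow_add hr₀]; ring_nf
  calc c / a r ≤ c / ENNReal.ofReal (r ^ q₁) :=
        ENNReal.div_le_div_left (ofReal_rpow_lt_of_log_div_log_lt hr₀ hr₁ ha).le c
    _ = ENNReal.ofReal (c.toReal * r ^ (-q₁)) := by
        rw [div_eq_mul_inv, ← ENNReal.ofReal_inv_of_pos (Real.rpow_pos_of_pos hr₀ _),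
          ← Real.rpow_neg hr₀.le, ENNReal.ofReal_mul ENNReal.toReal_nonneg,
          ENNReal.ofReal_toReal hc]
    _ < ENNReal.ofReal (r ^ (-q₂)) :=
        (ENNReal.ofReal_lt_ofReal_iff (Real.rpow_pos_of_pos hr₀ _)).2 hconst
    _ < b r := ofReal_rpow_neg_lt_of_lt_log_div_neg_log hr₀ hr₁ hb

end Exponents

lemma ENat.ceil_lt_of_add_one_le {q : ℝ≥0∞} {n : ℕ∞} (hq : q ≠ ⊤) (h : q + 1 ≤ n) : ⌈q⌉ₑ < n :=
  (ENat.add_one_le_iff (ENat.ceil_eq_top.not.2 hq)).1 (ENat.ceil_add_one q ▸ ENat.ceil_le.2 h)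

section HitTime

variable {X : Type*} {T : X → X} {S : Set X} {x : X} {n : ℕ}

lemma hitTime_le_coe_iff : hitTime T S x ≤ n ↔ ∃ k, 0 < k ∧ k ≤ n ∧ T^[k] x ∈ S := by
  have hlt {m : ℕ∞} : m < n + 1 ↔ m ≤ n := ENat.lt_add_one_iff (ENat.natCast_ne_top n)
  rw [← hlt, hitTime, sInf_lt_iff]
  simp only [mem_image, mem_ofPred_eq]
  constructor
  · rintro ⟨_, ⟨k, ⟨hk, hkS⟩, rfl⟩, hkn⟩
    exact ⟨k, hk, by exact_mod_cast hlt.1 hkn, hkS⟩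
  · rintro ⟨k, hk, hkn, hkS⟩
    exact ⟨k, ⟨k, ⟨hk, hkS⟩, rfl⟩, hlt.2 (by exact_mod_cast hkn)⟩

lemma coe_lt_hitTime_iff : (n : ℕ∞) < hitTime T S x ↔ ∀ k, 0 < k → k ≤ n → T^[k] x ∉ S := by
  rw [← not_le, hitTime_le_coe_iff]
  push Not
  rfl

lemma zero_lt_hitTime : 0 < hitTime T S x := by
  exact_mod_cast coe_lt_hitTime_iff.2 fun k hk hk0 => absurd hk (by omega)

lemma coe_succ_lt_hitTime_iff :
    ((n + 1 : ℕ) : ℕ∞) < hitTime T S x ↔ T x ∉ S ∧ (n : ℕ∞) < hitTime T S (T x) := by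
  simp only [coe_lt_hitTime_iff, ← Function.iterate_succ_apply]
  constructor
  · intro h
    exact ⟨h 1 one_pos (by omega), fun k hk hkn => h (k + 1) (by omega) (by omega)⟩
  · rintro ⟨h1, h⟩ (_ | _ | k) hk hkn
    · omega
    · exact h1
    · exact h (k + 1) (by omega) (by omega)

variable [MeasurableSpace X]

lemma measurableSet_coe_lt_hitTime (hT : Measurable T) (hS : MeasurableSet S) (n : ℕ) :
    MeasurableSet {x | (n : ℕ∞) < hitTime T S x} := by
  simp_rw [coe_lt_hitTime_iff, ofPred_forall]
  exact .iInter fun k => .iInter fun _ => .iInter fun _ => hT.iterate k hS.compl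

lemma measurableSet_hitTime_le (hT : Measurable T) (hS : MeasurableSet S) (n : ℕ∞) :
    MeasurableSet {x | hitTime T S x ≤ n} := by
  induction n using ENat.recTopCoe with
  | top => simp
  | coe n => simpa only [compl_ofPred, not_lt] using (measurableSet_coe_lt_hitTime hT hS n).compl

variable {μ : Measure X}

lemma measure_coe_lt_hitTime_eq_add (hT : MeasurePreserving T μ μ) (hS : MeasurableSet S)
    (n : ℕ) :
    μ {x | (n : ℕ∞) < hitTime T S x} =
      μ {x | ((n + 1 : ℕ) : ℕ∞) < hitTime T S x} + μ (S ∩ {x | (n : ℕ∞) < hitTime T S x}) := by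
  have hU := measurableSet_coe_lt_hitTime hT.measurable hS n
  have hsplit : T ⁻¹' {x | (n : ℕ∞) < hitTime T S x} =
      {x | ((n + 1 : ℕ) : ℕ∞) < hitTime T S x} ∪ T ⁻¹' (S ∩ {x | (n : ℕ∞) < hitTime T S x}) := by
    ext x
    simp only [mem_union, mem_preimage, mem_inter_iff, mem_ofPred_eq, coe_succ_lt_hitTime_iff]
    tauto
  have hdisj : Disjoint {x | ((n + 1 : ℕ) : ℕ∞) < hitTime T S x}
      (T ⁻¹' (S ∩ {x | (n : ℕ∞) < hitTime T S x})) :=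
    disjoint_left.2 fun x hx hx' => (coe_succ_lt_hitTime_iff.1 hx).1 hx'.1
  rw [← hT.measure_preimage hU.nullMeasurableSet, hsplit,
    measure_union hdisj (hT.measurable (hS.inter hU)),
    hT.measure_preimage (hS.inter hU).nullMeasurableSet]

lemma measure_coe_lt_hitTime_add_sum (hT : MeasurePreserving T μ μ) (hS : MeasurableSet S)
    (n : ℕ) :
    μ {x | (n : ℕ∞) < hitTime T S x} +
      ∑ k ∈ Finset.range n, μ (S ∩ {x | (k : ℕ∞) < hitTime T S x}) = μ univ := by
  induction n with
  | zero => simp [zero_lt_hitTime]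
  | succ n ih =>
    rw [← ih, measure_coe_lt_hitTime_eq_add hT hS n, Finset.sum_range_succ]
    ring

/-- A quantitative form of Kac's lemma. -/
lemma natCast_mul_measure_inter_le_hitTime_le [IsFiniteMeasure μ]
    (hT : MeasurePreserving T μ μ) (hS : MeasurableSet S) (n : ℕ) :
    n * μ (S ∩ {x | (n : ℕ∞) ≤ hitTime T S x}) ≤ μ {x | hitTime T S x ≤ n} := by
  have hsum : μ {x | hitTime T S x ≤ n} =
      ∑ k ∈ Finset.range n, μ (S ∩ {x | (k : ℕ∞) < hitTime T S x}) := by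
    have hcompl :=
      measure_add_measure_compl (μ := μ) (measurableSet_coe_lt_hitTime hT.measurable hS n)
    rw [compl_ofPred] at hcompl
    simp only [not_lt] at hcompl
    rw [← measure_coe_lt_hitTime_add_sum hT hS n] at hcompl
    exact (ENNReal.add_right_inj (measure_ne_top μ _)).1 hcompl
  have hmono : ∀ k ∈ Finset.range n, μ (S ∩ {x | (n : ℕ∞) ≤ hitTime T S x}) ≤
      μ (S ∩ {x | (k : ℕ∞) < hitTime T S x}) := fun k hk =>
    measure_mono <| inter_subset_inter_right S fun _ hx =>
      lt_of_lt_of_le (Nat.cast_lt.2 (Finset.mem_range.1 hk)) (mem_ofPred_eq ▸ hx)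
  simpa [hsum] using Finset.card_nsmul_le_sum _ _ _ hmono

variable [IsFiniteMeasure μ]

lemma measure_inter_div_le_hitTime_div_le (hT : MeasurePreserving T μ μ) (hS : MeasurableSet S)
    (hS₀ : μ S ≠ 0) {c : ℝ≥0∞} (hc₀ : c ≠ 0) (hc : c ≠ ⊤) :
    μ {x | x ∈ S ∧ c / μ S ≤ hitTime T S x} / μ S ≤
      μ {x | hitTime T S x ≤ ⌈c / μ S⌉ₑ} / c := by
  obtain ⟨n, hn⟩ := ENat.ne_top_iff_exists.1 (ENat.ceil_eq_top.not.2 (ENNReal.div_ne_top hc hS₀))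
  have hsub : {x | x ∈ S ∧ c / μ S ≤ hitTime T S x} ⊆ S ∩ {x | (n : ℕ∞) ≤ hitTime T S x} :=
    fun x ⟨hxS, hx⟩ => ⟨hxS, hn ▸ ENat.ceil_le.2 hx⟩
  have hceil : c / μ S ≤ n := by simpa [← hn] using ENat.le_ceil_self (r := c / μ S)
  rw [← hn, ENNReal.le_div_iff_mul_le (Or.inl hc₀) (Or.inl hc)]
  calc μ {x | x ∈ S ∧ c / μ S ≤ hitTime T S x} / μ S * c
      = c / μ S * μ {x | x ∈ S ∧ c / μ S ≤ hitTime T S x} := by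
        rw [div_eq_mul_inv, div_eq_mul_inv]; ring
    _ ≤ n * μ (S ∩ {x | (n : ℕ∞) ≤ hitTime T S x}) := mul_le_mul' hceil (measure_mono hsub)
    _ ≤ μ {x | hitTime T S x ≤ n} := natCast_mul_measure_inter_le_hitTime_le hT hS n

lemma tendsto_measure_hitTime_le_ceil_div (hT : Measurable T) {S : ℝ → Set X}
    (hS : ∀ r, MeasurableSet (S r)) (hS₀ : ∀ r, 0 < r → μ (S r) ≠ 0)
    (hgap : ∀ᵐ x ∂μ,
      limsup (fun r => log (μ (S r)) / ((Real.log r : ℝ) : EReal)) (𝓝[>] 0) <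
        liminf (fun r => log (hitTime T (S r) x : ℝ≥0∞) / ((-Real.log r : ℝ) : EReal)) (𝓝[>] 0))
    {c : ℝ≥0∞} (hc : c ≠ ⊤) :
    Tendsto (fun r => μ {x | hitTime T (S r) x ≤ ⌈c / μ (S r)⌉ₑ}) (𝓝[>] 0) (𝓝 0) := by
  simpa using tendsto_measure_of_ae_tendsto_indicator_of_isFiniteMeasure (𝓝[>] (0 : ℝ))
    MeasurableSet.empty (fun r => measurableSet_hitTime_le hT (hS r) _) <| by
    filter_upwards [hgap] with x hx
    filter_upwards [eventually_div_lt_of_limsup_lt_liminf hx (c := c + μ univ) (by finiteness),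
      self_mem_nhdsWithin] with r hτ hr
    have hone : 1 ≤ μ univ / μ (S r) :=
      (ENNReal.le_div_iff_mul_le (Or.inl (hS₀ r hr)) (Or.inl (measure_ne_top _ _))).2
        (by simpa using measure_mono (subset_univ _))
    refine iff_of_false (not_le.2 (ENat.ceil_lt_of_add_one_le (div_ne_top hc (hS₀ r hr)) ?_)) id
    calc c / μ (S r) + 1 ≤ (c + μ univ) / μ (S r) := by rw [ENNReal.add_div]; gcongr
      _ ≤ _ := hτ.le

end HitTime

theorem trivial_return_time_statistics_general
    {X : Type*} [MeasurableSpace X] (μ : Measure X) [IsFiniteMeasure μ]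
    (T : X → X) (hT : Ergodic T μ)
    (f : X → ℝ) (hf : Measurable f)
    (hpos : ∀ r : ℝ, 0 < r → 0 < μ {x | f x ≤ r})
    (hgap : ∀ᵐ x ∂μ,
      limsup (fun r : ℝ =>
          ENNReal.log (μ {y | f y ≤ r}) / ((Real.log r : ℝ) : EReal)) (𝓝[>] 0)
        < liminf (fun r : ℝ =>
          ENNReal.log ((hitTime T {y | f y ≤ r} x : ℝ≥0∞)) / ((- Real.log r : ℝ) : EReal))
          (𝓝[>] 0)) :
    ∀ t : ℝ, 0 < t →
      Tendsto (fun r : ℝ =>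
          (μ {x | x ∈ {y | f y ≤ r} ∧
              ENNReal.ofReal t / μ {y | f y ≤ r} ≤ (hitTime T {y | f y ≤ r} x : ℝ≥0∞)}).toReal
            / (μ {y | f y ≤ r}).toReal)
        (𝓝[>] 0) (𝓝 0) := by
  intro t ht
  have hS : ∀ r, MeasurableSet {y | f y ≤ r} := fun r => hf measurableSet_Iic
  have ht₀ : ENNReal.ofReal t ≠ 0 := (ENNReal.ofReal_pos.2 ht).ne'
  have hbad := tendsto_measure_hitTime_le_ceil_div hT.measurable hS (fun r hr => (hpos r hr).ne')
    hgap (c := ENNReal.ofReal t) ofReal_ne_top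
  have hratio : Tendsto (fun r => μ {x | x ∈ {y | f y ≤ r} ∧
      ENNReal.ofReal t / μ {y | f y ≤ r} ≤ (hitTime T {y | f y ≤ r} x : ℝ≥0∞)} / μ {y | f y ≤ r})
      (𝓝[>] 0) (𝓝 0) := by
    refine tendsto_of_tendsto_of_tendsto_of_le_of_le' tendsto_const_nhds
      (by simpa using ENNReal.Tendsto.div_const hbad (Or.inr ht₀))
      (Eventually.of_forall fun _ => zero_le) ?_
    filter_upwards [self_mem_nhdsWithin] with r hr
    exact measure_inter_div_le_hitTime_div_le hT.toMeasurePreserving (hS r) (hpos r hr).ne' ht₀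
      ofReal_ne_top
  simpa only [Function.comp_def, ENNReal.toReal_div, ENNReal.toReal_zero] using
    (ENNReal.tendsto_toReal zero_ne_top).comp hratio

/-- If `(X,T,μ)` is ergodic with `μ` finite and nonatomic, and a.e.
`liminf_{r→0} log τ(x,S_r)/(-log r) > limsup_{r→0} log μ(S_r)/log r` for the sublevel sets
`S_r = {x : f x ≤ r}`, then the return time statistics in the sets `S_r` is trivial:
for every `t > 0`, `lim_{r→0} μ({x ∈ S_r : τ(x,S_r) ≥ t/μ(S_r)})/μ(S_r) = 0`. -/
theorem trivial_return_time_statistics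
    {X : Type*} [MeasurableSpace X] (μ : Measure X) [IsFiniteMeasure μ] [NullSingletonClass μ]
    (T : X → X) (hT : Ergodic T μ)
    (f : X → ℝ) (hf : Measurable f) (hf0 : ∀ x, 0 ≤ f x)
    (hpos : ∀ r : ℝ, 0 < r → 0 < μ {x | f x ≤ r})
    (hgap : ∀ᵐ x ∂μ,
      limsup (fun r : ℝ =>
          ENNReal.log (μ {y | f y ≤ r}) / ((Real.log r : ℝ) : EReal)) (𝓝[>] 0)
        < liminf (fun r : ℝ =>
          ENNReal.log ((hitTime T {y | f y ≤ r} x : ℝ≥0∞)) / ((- Real.log r : ℝ) : EReal))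
          (𝓝[>] 0)) :
    ∀ t : ℝ, 0 < t →
      Tendsto (fun r : ℝ =>
          (μ {x | x ∈ {y | f y ≤ r} ∧
              ENNReal.ofReal t / μ {y | f y ≤ r} ≤ (hitTime T {y | f y ≤ r} x : ℝ≥0∞)}).toReal
            / (μ {y | f y ≤ r}).toReal)
        (𝓝[>] 0) (𝓝 0) :=
  trivial_return_time_statistics_general μ T hT f hf hpos hgap
end
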